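/- Zero-infinity law for the first moment of all-zero-attribute isolated nodes: Assume Γ(0) < Γ(1) and, with ρ > 0, that 1 + ρ ln μ(0) > 0. Then for any ρ-admissible scaling L : ℕ → ℕ, the quantity E[I_n^{(0)}(L_n)] = n μ(0)^{L_n} (1 − Γ(0)^{L_n})^{n−1} converges, as n → ∞, to ∞ if 1 + ρ ln Γ(0) < 0, and to 0 if 1 + ρ ln Γ(0) > 0. -/

import Mathlib

open MeasureTheory Filter

/-- Bernoulli measure on `Bool` with parameter `p` = probability of `true`. -/
noncomputable def bern (p : ℝ) : Measure Bool :=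
  (Real.toNNReal p) • Measure.dirac true + (Real.toNNReal (1 - p)) • Measure.dirac false

/-- Uniform distribution on `[0,1]`. -/
noncomputable def unif01 : Measure ℝ := MeasureTheory.volume.restrict (Set.Icc (0:ℝ) 1)

/-- The probability space of the homogeneous binary MAG model `M(n;L)`:
i.i.d. Bernoulli attribute bits and, independently, i.i.d. Uniform(0,1) variables. -/
noncomputable def magMeasure (n L : ℕ) (p : ℝ) :
    Measure ((Fin n → Fin L → Bool) × (Fin n × Fin n → ℝ)) :=
  (Measure.pi fun _ : Fin n => Measure.pi fun _ : Fin L => bern p).prod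
    (Measure.pi fun _ : Fin n × Fin n => unif01)

/-- `Q_L(a,b) = ∏_{ℓ} q(a_ℓ, b_ℓ)`. -/
def QL {L : ℕ} (q : Bool → Bool → ℝ) (a b : Fin L → Bool) : ℝ :=
  ∏ ℓ : Fin L, q (a ℓ) (b ℓ)

/-- Distinct nodes `u, v` are adjacent iff `U(u,v) ≤ Q_L(A(u),A(v))`, where the uniform
variable attached to the unordered pair `{u,v}` is the one indexed by `(min u v, max u v)`. -/
def Adj {n L : ℕ} (q : Bool → Bool → ℝ)
    (ω : (Fin n → Fin L → Bool) × (Fin n × Fin n → ℝ)) (u v : Fin n) : Prop :=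
  u ≠ v ∧ ω.2 (min u v, max u v) ≤ QL q (ω.1 u) (ω.1 v)

/-- Node `u` is isolated if it is adjacent to no other node. -/
def Isolated {n L : ℕ} (q : Bool → Bool → ℝ)
    (ω : (Fin n → Fin L → Bool) × (Fin n × Fin n → ℝ)) (u : Fin n) : Prop :=
  ∀ v, ¬ Adj q ω u v

/-- `S_L(u)`: the number of attributes exhibited by node `u`. -/
def Scount {n L : ℕ} (ω : (Fin n → Fin L → Bool) × (Fin n × Fin n → ℝ)) (u : Fin n) : ℕ :=
  (Finset.univ.filter fun ℓ : Fin L => ω.1 u ℓ = true).card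

open scoped Classical in
/-- `I_n(L)`: the number of isolated nodes. -/
noncomputable def numIsolated {n L : ℕ} (q : Bool → Bool → ℝ)
    (ω : (Fin n → Fin L → Bool) × (Fin n × Fin n → ℝ)) : ℕ :=
  (Finset.univ.filter fun u : Fin n => Isolated q ω u).card

open scoped Classical in
/-- `I_n^{(k)}(L)`: the number of isolated nodes `u` with `S_L(u) = k`. -/
noncomputable def numIsolatedWith {n L : ℕ} (q : Bool → Bool → ℝ) (k : ℕ)
    (ω : (Fin n → Fin L → Bool) × (Fin n × Fin n → ℝ)) : ℕ :=
  (Finset.univ.filter fun u : Fin n => Isolated q ω u ∧ Scount ω u = k).card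

open scoped Classical in
/-- `ξ^{(k)}(u)`: the indicator that node `u` is isolated and `S_L(u) = k`. -/
noncomputable def xiInd {n L : ℕ} (q : Bool → Bool → ℝ) (k : ℕ)
    (ω : (Fin n → Fin L → Bool) × (Fin n × Fin n → ℝ)) (u : Fin n) : ℝ :=
  if Isolated q ω u ∧ Scount ω u = k then 1 else 0

/-- `Γ(a) = μ(0) q(a,0) + μ(1) q(a,1)`, with `μ(1) = μ1`, `μ(0) = 1 - μ1`. -/
def Gam (μ1 : ℝ) (q : Bool → Bool → ℝ) (a : Bool) : ℝ :=
  (1 - μ1) * q a false + μ1 * q a true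

/-- A scaling `L : ℕ → ℕ` is `ρ`-admissible if `L_n ~ ρ ln n` as `n → ∞`. -/
def Admissible (ρ : ℝ) (L : ℕ → ℕ) : Prop :=
  Asymptotics.IsEquivalent Filter.atTop (fun n => (L n : ℝ)) (fun n => ρ * Real.log n)

/-- `G(ν,μ) = (μ/ν)^ν ((1-μ)/(1-ν))^{1-ν}` (real powers; the conventions at `ν = 0,1`
agree with the continuous extension). -/
noncomputable def Gfun (ν μ : ℝ) : ℝ :=
  (μ / ν) ^ ν * ((1 - μ) / (1 - ν)) ^ (1 - ν)

/-- `Q*_L(a) = E[Q_L(a,A)]`, `A` a vector of `L` i.i.d. Bernoulli(μ1) bits. -/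
noncomputable def Qstar {L : ℕ} (μ1 : ℝ) (q : Bool → Bool → ℝ) (a : Fin L → Bool) : ℝ :=
  ∫ b, QL q a b ∂(Measure.pi fun _ : Fin L => bern μ1)

/-- `Q**_L(a,b) = E[Q_L(a,A) Q_L(b,A)]`. -/
noncomputable def Qstarstar {L : ℕ} (μ1 : ℝ) (q : Bool → Bool → ℝ) (a b : Fin L → Bool) : ℝ :=
  ∫ c, QL q a c * QL q b c ∂(Measure.pi fun _ : Fin L => bern μ1)

/-- `Q̃_L(a,b) = Q*_L(a) + Q*_L(b) − Q**_L(a,b)`. -/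
noncomputable def Qtilde {L : ℕ} (μ1 : ℝ) (q : Bool → Bool → ℝ) (a b : Fin L → Bool) : ℝ :=
  Qstar μ1 q a + Qstar μ1 q b - Qstarstar μ1 q a b


/-! Given the attributes, the uniforms attached to the pairs `{u, w}` are independent, so node `u`
is isolated with `S_L(u) = 0` with conditional probability
`𝟙[A(u) = 0] ∏_{w ≠ u} (1 - Q_L(0, A(w)))`. This is a product of functions of the independent
attribute vectors, and `E[Q_L(0, A)] = Γ(0)^L`, so the probability is `μ(0)^L (1 - Γ(0)^L)^(n-1)`;
summing over `u` gives the first moment.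

For the asymptotics write `n x^(L_n) = exp (ln n (1 + (L_n / ln n) ln x))` with `L_n / ln n → ρ`,
so `n x^(L_n)` is eventually squeezed between powers of `n` with exponents near `1 + ρ ln x`.
Thus `n μ(0)^(L_n) → ∞`. If `1 + ρ ln Γ(0) < 0` then `n Γ(0)^(L_n) → 0` and the correction
`(1 - Γ(0)^(L_n))^(n-1)` tends to `1`. If `1 + ρ ln Γ(0) > 0` then `n Γ(0)^(L_n) ≥ n^α` for some
`α > 0`, and the correction is at most `exp (1 - n^α)`, which beats the factor `n`. -/

open Real Topology

lemma integral_bern {p : ℝ} (h0 : 0 ≤ p) (h1 : p ≤ 1) (f : Bool → ℝ) :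
    ∫ b, f b ∂bern p = (1 - p) * f false + p * f true := by
  rw [bern, integral_add_measure .of_finite .of_finite, integral_smul_nnreal_measure,
    integral_smul_nnreal_measure, integral_dirac, integral_dirac, NNReal.smul_def,
    NNReal.smul_def, Real.coe_toNNReal _ h0, Real.coe_toNNReal _ (sub_nonneg.2 h1)]
  simp only [smul_eq_mul]
  ring

instance (p : ℝ) : IsFiniteMeasure (bern p) := by
  unfold bern; infer_instance

lemma isProbabilityMeasure_bern {p : ℝ} (h0 : 0 ≤ p) (h1 : p ≤ 1) :
    IsProbabilityMeasure (bern p) := by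
  constructor
  rw [bern, Measure.add_apply, Measure.smul_apply, Measure.smul_apply, measure_univ, measure_univ]
  simp only [ENNReal.smul_def, smul_eq_mul, mul_one, ← ENNReal.coe_add,
    ← Real.toNNReal_add h0 (sub_nonneg.2 h1)]
  simp

instance : IsProbabilityMeasure unif01 :=
  ⟨by rw [unif01, Measure.restrict_apply_univ, Real.volume_Icc]; norm_num⟩

lemma unif01_Ioi {t : ℝ} (ht : 0 ≤ t) : unif01 (Set.Ioi t) = ENNReal.ofReal (1 - t) := by
  have : Set.Ioi t ∩ Set.Icc 0 1 = Set.Ioc t 1 := by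
    ext x; simp only [Set.mem_inter_iff, Set.mem_Ioi, Set.mem_Icc, Set.mem_Ioc]; grind
  rw [unif01, Measure.restrict_apply measurableSet_Ioi, this, Real.volume_Ioc]

lemma qstar_eq_prod_gam {L : ℕ} {μ1 : ℝ} (h0 : 0 ≤ μ1) (h1 : μ1 ≤ 1) (q : Bool → Bool → ℝ)
    (a : Fin L → Bool) : Qstar μ1 q a = ∏ ℓ, Gam μ1 q (a ℓ) := by
  simp only [Qstar, QL]
  rw [integral_fintype_prod_eq_prod (fun ℓ b => q (a ℓ) b)]
  simp only [integral_bern h0 h1, Gam]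

lemma gam_pos {μ1 : ℝ} (h0 : 0 ≤ μ1) (h1 : μ1 ≤ 1) {q : Bool → Bool → ℝ}
    (hq : ∀ a b, 0 < q a b) (a : Bool) : 0 < Gam μ1 q a := by
  have := hq a false; have := hq a true
  unfold Gam; rcases le_total (q a false) (q a true) with h | h <;> nlinarith

lemma gam_lt_one {μ1 : ℝ} (h0 : 0 ≤ μ1) (h1 : μ1 ≤ 1) {q : Bool → Bool → ℝ}
    (hq : ∀ a b, q a b < 1) (a : Bool) : Gam μ1 q a < 1 := by
  have := hq a false; have := hq a true
  unfold Gam; rcases le_total (q a false) (q a true) with h | h <;> nlinarith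

lemma pi_unif01_setOf_forall_lt {ι κ : Type*} [Fintype κ] (s : Finset ι) {e : ι → κ}
    (he : Function.Injective e) {t : ι → ℝ} (ht : ∀ i ∈ s, 0 ≤ t i) :
    Measure.pi (fun _ : κ => unif01) {x | ∀ i ∈ s, t i < x (e i)}
      = ∏ i ∈ s, ENNReal.ofReal (1 - t i) := by
  classical
  set T : κ → Set ℝ := fun k => {y | ∀ i ∈ s, e i = k → t i < y}
  have hT : ∀ i ∈ s, T (e i) = Set.Ioi (t i) := fun i hi => by
    ext y; simpa [T] using ⟨fun h => h i hi rfl, fun h j _ hj => he hj ▸ h⟩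
  have hT' : ∀ k ∉ s.image e, T k = Set.univ := fun k hk => by
    refine Set.eq_univ_of_forall fun y => ?_
    exact fun i hi hik => absurd (Finset.mem_image.2 ⟨i, hi, hik⟩) hk
  have hset : {x : κ → ℝ | ∀ i ∈ s, t i < x (e i)} = Set.univ.pi T := by
    ext x
    exact ⟨fun h k _ i hi hik => hik ▸ h i hi, fun h i hi => h _ trivial i hi rfl⟩
  rw [hset, Measure.pi_pi, ← Finset.prod_subset (Finset.subset_univ (s.image e))
    (fun k _ hk => by rw [hT' k hk, measure_univ]), Finset.prod_image he.injOn]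
  exact Finset.prod_congr rfl fun i hi => by rw [hT i hi, unif01_Ioi (ht i hi)]

lemma injective_min_max {α : Type*} [LinearOrder α] (u : α) :
    Function.Injective fun v => (min u v, max u v) := by
  intro v w h
  simp only [Prod.mk.injEq] at h
  grind

lemma ql_nonneg {L : ℕ} {q : Bool → Bool → ℝ} (hq : ∀ a b, 0 ≤ q a b) (a b : Fin L → Bool) :
    0 ≤ QL q a b :=
  Finset.prod_nonneg fun _ _ => hq _ _

lemma ql_le_one {L : ℕ} {q : Bool → Bool → ℝ} (hq : ∀ a b, 0 ≤ q a b ∧ q a b ≤ 1)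
    (a b : Fin L → Bool) : QL q a b ≤ 1 :=
  Finset.prod_le_one (fun _ _ => (hq _ _).1) fun _ _ => (hq _ _).2

instance (n L : ℕ) (p : ℝ) : IsFiniteMeasure (magMeasure n L p) := by
  unfold magMeasure; infer_instance

section Model

variable {n L : ℕ} (q : Bool → Bool → ℝ)

lemma scount_eq_zero_iff (ω : (Fin n → Fin L → Bool) × (Fin n × Fin n → ℝ)) (u : Fin n) :
    Scount ω u = 0 ↔ ∀ ℓ, ω.1 u ℓ = false := by
  simp [Scount, Finset.filter_eq_empty_iff]

lemma isolated_iff (ω : (Fin n → Fin L → Bool) × (Fin n × Fin n → ℝ)) (u : Fin n) :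
    Isolated q ω u ↔ ∀ v ∈ Finset.univ.erase u, QL q (ω.1 u) (ω.1 v) < ω.2 (min u v, max u v) := by
  simp [Isolated, Adj, imp_iff_not_or, ne_comm]

lemma measurableSet_isolated_scount (k : ℕ) (u : Fin n) :
    MeasurableSet {ω : (Fin n → Fin L → Bool) × (Fin n × Fin n → ℝ) |
      Isolated q ω u ∧ Scount ω u = k} := by
  have hscount : MeasurableSet {ω : (Fin n → Fin L → Bool) × (Fin n × Fin n → ℝ) |
      Scount ω u = k} :=
    (MeasurableSet.of_discrete (s := {a | Scount (a, 0) u = k})).preimage measurable_fst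
  have hisolated : MeasurableSet {ω : (Fin n → Fin L → Bool) × (Fin n × Fin n → ℝ) |
      Isolated q ω u} := by
    unfold Isolated Adj
    measurability
  exact hisolated.inter hscount

lemma integral_numIsolatedWith (P : Measure ((Fin n → Fin L → Bool) × (Fin n × Fin n → ℝ)))
    [IsFiniteMeasure P] (k : ℕ) :
    ∫ ω, (numIsolatedWith q k ω : ℝ) ∂P
      = ∑ u, P.real {ω | Isolated q ω u ∧ Scount ω u = k} := by
  classical
  have hind : ∀ ω : (Fin n → Fin L → Bool) × (Fin n × Fin n → ℝ), (numIsolatedWith q k ω : ℝ)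
      = ∑ u, {ω | Isolated q ω u ∧ Scount ω u = k}.indicator 1 ω := fun ω => by
    simp only [Set.indicator_apply, Set.mem_ofPred_eq, Pi.one_apply, Finset.sum_boole]
    rw [numIsolatedWith]
  simp_rw [hind]
  rw [integral_finsetSum _ fun u _ => (integrable_const 1).indicator
    (measurableSet_isolated_scount q k u)]
  simp_rw [integral_indicator_one (measurableSet_isolated_scount q k _)]

variable {q} {μ1 : ℝ}

lemma pi_unif01_preimage_isolated_scount_zero (hq : ∀ a b, 0 ≤ q a b ∧ q a b ≤ 1)
    (u : Fin n) (a : Fin n → Fin L → Bool) :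
    Measure.pi (fun _ : Fin n × Fin n => unif01)
        (Prod.mk a ⁻¹' {ω | Isolated q ω u ∧ Scount ω u = 0})
      = ENNReal.ofReal (∏ w, if w = u then ∏ ℓ, (if a w ℓ = false then 1 else 0)
          else 1 - QL q (fun _ => false) (a w)) := by
  by_cases ha : ∀ ℓ, a u ℓ = false
  · have hau : a u = fun _ => false := funext ha
    have hpre : Prod.mk a ⁻¹' {ω | Isolated q ω u ∧ Scount ω u = 0}
        = {x | ∀ v ∈ Finset.univ.erase u, QL q (fun _ => false) (a v) < x (min u v, max u v)} := by
      ext x; simp [isolated_iff, scount_eq_zero_iff, ha, hau]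
    rw [hpre, pi_unif01_setOf_forall_lt _ (injective_min_max u)
      (fun v _ => ql_nonneg (fun a b => (hq a b).1) _ _), ← ENNReal.ofReal_prod_of_nonneg
      (fun v _ => sub_nonneg.2 (ql_le_one hq _ _)), ← Finset.mul_prod_erase _ _ (Finset.mem_univ u)]
    simp only [if_pos, ha, Finset.prod_const_one, one_mul]
    exact congrArg _ (Finset.prod_congr rfl fun w hw => (if_neg (Finset.ne_of_mem_erase hw)).symm)
  · have hpre : Prod.mk a ⁻¹' {ω | Isolated q ω u ∧ Scount ω u = 0} = ∅ := by
      ext x; simp [scount_eq_zero_iff, ha]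
    obtain ⟨ℓ, hℓ⟩ := not_forall.1 ha
    rw [hpre, measure_empty, Finset.prod_eq_zero (Finset.mem_univ u)]
    · simp
    · simp only [if_pos]
      exact Finset.prod_eq_zero (Finset.mem_univ ℓ) (if_neg hℓ)

lemma magMeasure_isolated_scount_zero (h0 : 0 ≤ μ1) (h1 : μ1 ≤ 1)
    (hq : ∀ a b, 0 ≤ q a b ∧ q a b ≤ 1) (u : Fin n) :
    magMeasure n L μ1 {ω | Isolated q ω u ∧ Scount ω u = 0}
      = ENNReal.ofReal ((1 - μ1) ^ L * (1 - Gam μ1 q false ^ L) ^ (n - 1)) := by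
  have := isProbabilityMeasure_bern h0 h1
  set μL : Measure (Fin L → Bool) := Measure.pi fun _ => bern μ1
  set g : Fin n → (Fin L → Bool) → ℝ := fun w b =>
    if w = u then ∏ ℓ, (if b ℓ = false then 1 else 0) else 1 - QL q (fun _ => false) b
  have hg_nonneg : ∀ w b, 0 ≤ g w b := fun w b => by
    by_cases hw : w = u
    · simp only [g, if_pos hw]; exact Finset.prod_nonneg fun _ _ => by split_ifs <;> norm_num
    · simp only [g, if_neg hw]; exact sub_nonneg.2 (ql_le_one hq _ _)
  have hg_self : ∫ b, g u b ∂μL = (1 - μ1) ^ L := by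
    simp only [g, if_pos, μL, integral_bern h0 h1,
      integral_fintype_prod_eq_prod (fun _ b => if b = false then (1:ℝ) else 0)]
    simp
  have hg_other : ∀ w ≠ u, ∫ b, g w b ∂μL = 1 - Gam μ1 q false ^ L := fun w hw => by
    simp only [g, if_neg hw]
    rw [integral_sub (integrable_const 1) .of_finite, integral_const, ← Qstar,
      qstar_eq_prod_gam h0 h1]
    simp
  calc magMeasure n L μ1 {ω | Isolated q ω u ∧ Scount ω u = 0}
      = ∫⁻ a, ENNReal.ofReal (∏ w, g w (a w)) ∂(Measure.pi fun _ => μL) := by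
        rw [magMeasure, Measure.prod_apply (measurableSet_isolated_scount q 0 u)]
        simp_rw [pi_unif01_preimage_isolated_scount_zero hq u]
        rfl
    _ = ENNReal.ofReal (∏ w, ∫ b, g w b ∂μL) := by
        rw [← integral_fintype_prod_eq_prod, ofReal_integral_eq_lintegral_ofReal .of_finite
          (.of_forall fun a => Finset.prod_nonneg fun w _ => hg_nonneg w (a w))]
    _ = _ := by
        rw [← Finset.mul_prod_erase _ _ (Finset.mem_univ u), hg_self,
          Finset.prod_congr rfl fun w hw => hg_other w (Finset.ne_of_mem_erase hw),
          Finset.prod_const, Finset.card_erase_of_mem (Finset.mem_univ u), Finset.card_univ,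
          Fintype.card_fin]

lemma integral_numIsolatedWith_zero (h0 : 0 ≤ μ1) (h1 : μ1 ≤ 1)
    (hq : ∀ a b, 0 < q a b ∧ q a b < 1) :
    ∫ ω, (numIsolatedWith q 0 ω : ℝ) ∂(magMeasure n L μ1)
      = n * (1 - μ1) ^ L * (1 - Gam μ1 q false ^ L) ^ (n - 1) := by
  have hΓ : Gam μ1 q false ^ L ≤ 1 :=
    pow_le_one₀ (gam_pos h0 h1 (fun a b => (hq a b).1) _).le
      (gam_lt_one h0 h1 (fun a b => (hq a b).2) _).le
  have hnonneg : 0 ≤ (1 - μ1) ^ L * (1 - Gam μ1 q false ^ L) ^ (n - 1) :=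
    mul_nonneg (pow_nonneg (sub_nonneg.2 h1) _) (pow_nonneg (sub_nonneg.2 hΓ) _)
  simp_rw [integral_numIsolatedWith, measureReal_def, magMeasure_isolated_scount_zero h0 h1
    (fun a b => ⟨(hq a b).1.le, (hq a b).2.le⟩), ENNReal.toReal_ofReal hnonneg, Finset.sum_const,
    Finset.card_univ, Fintype.card_fin, nsmul_eq_mul, mul_assoc]

end Model

lemma tendsto_one_sub_pow_nhds_one {ι : Type*} {l : Filter ι} {x : ι → ℝ} {m : ι → ℕ}
    (hx0 : ∀ i, 0 ≤ x i) (hx1 : ∀ i, x i ≤ 1) (h : Tendsto (fun i => (m i : ℝ) * x i) l (𝓝 0)) :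
    Tendsto (fun i => (1 - x i) ^ m i) l (𝓝 1) := by
  have hlower : Tendsto (fun i => 1 - (m i : ℝ) * x i) l (𝓝 1) := by
    simpa using (tendsto_const_nhds (x := (1 : ℝ))).sub h
  refine tendsto_of_tendsto_of_tendsto_of_le_of_le hlower tendsto_const_nhds (fun i => ?_)
    fun i => pow_le_one₀ (sub_nonneg.2 (hx1 i)) (by linarith [hx0 i])
  have := one_add_mul_le_pow (by linarith [hx1 i] : (-2 : ℝ) ≤ -x i) (m i)
  simp only [mul_neg, ← sub_eq_add_neg] at this
  exact this

lemma one_sub_pow_le_exp_neg_mul {x : ℝ} (hx : x ≤ 1) (m : ℕ) : (1 - x) ^ m ≤ exp (-(m * x)) := by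
  rw [neg_mul_eq_mul_neg, exp_nat_mul]
  exact pow_le_pow_left₀ (sub_nonneg.2 hx) (by linarith [add_one_le_exp (-x)]) m

lemma tendsto_mul_exp_neg_rpow {α : ℝ} (hα : 0 < α) :
    Tendsto (fun x : ℝ => x * exp (-x ^ α)) atTop (𝓝 0) := by
  have := (tendsto_rpow_mul_exp_neg_mul_atTop_nhds_zero α⁻¹ 1 one_pos).comp (tendsto_rpow_atTop hα)
  refine this.congr' ?_
  filter_upwards [eventually_ge_atTop 0] with x hx
  simp [← rpow_mul hx, hα.ne']

lemma natCast_mul_pow_eq_exp {n : ℕ} (hn : 0 < n) {x : ℝ} (hx : 0 < x) (k : ℕ) :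
    (n : ℝ) * x ^ k = exp (log n + k * log x) := by
  rw [exp_add, exp_log (by exact_mod_cast hn), ← log_pow, exp_log (pow_pos hx k)]

namespace Admissible

variable {ρ : ℝ} {L : ℕ → ℕ}

lemma tendsto_div_log (hL : Admissible ρ L) :
    Tendsto (fun n : ℕ => (L n : ℝ) / log n) atTop (𝓝 ρ) := by
  have hlog : Tendsto (fun n : ℕ => log n) atTop atTop :=
    tendsto_log_atTop.comp tendsto_natCast_atTop_atTop
  have herror : Tendsto (fun n : ℕ => ((L n : ℝ) - ρ * log n) / log n) atTop (𝓝 0) :=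
    (hL.isLittleO.trans_isBigO (Asymptotics.isBigO_const_mul_self ρ _ _)).tendsto_div_nhds_zero
  refine (by simpa using herror.add_const ρ : Tendsto _ _ _).congr' ?_
  filter_upwards [hlog.eventually_gt_atTop 0] with n hn
  field_simp
  ring

lemma tendsto_one_add_div_log_mul (hL : Admissible ρ L) (c : ℝ) :
    Tendsto (fun n : ℕ => 1 + (L n : ℝ) / log n * c) atTop (𝓝 (1 + ρ * c)) :=
  (hL.tendsto_div_log.mul_const c).const_add 1

lemma eventually_rpow_le_mul_pow (hL : Admissible ρ L) {x α : ℝ} (hx : 0 < x)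
    (hα : α < 1 + ρ * log x) : ∀ᶠ n : ℕ in atTop, (n : ℝ) ^ α ≤ n * x ^ L n := by
  filter_upwards [(hL.tendsto_one_add_div_log_mul (log x)).eventually (eventually_gt_nhds hα),
    eventually_gt_atTop 1] with n hratio hn
  have hlog : 0 < log n := log_pos (by exact_mod_cast hn)
  rw [rpow_def_of_pos (by positivity), natCast_mul_pow_eq_exp (by omega) hx, exp_le_exp]
  have := mul_lt_mul_of_pos_left hratio hlog
  field_simp at this
  linarith

lemma eventually_mul_pow_le_rpow (hL : Admissible ρ L) {x α : ℝ} (hx : 0 < x)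
    (hα : 1 + ρ * log x < α) : ∀ᶠ n : ℕ in atTop, (n : ℝ) * x ^ L n ≤ n ^ α := by
  filter_upwards [(hL.tendsto_one_add_div_log_mul (log x)).eventually (eventually_lt_nhds hα),
    eventually_gt_atTop 1] with n hratio hn
  have hlog : 0 < log n := log_pos (by exact_mod_cast hn)
  rw [rpow_def_of_pos (by positivity), natCast_mul_pow_eq_exp (by omega) hx, exp_le_exp]
  have := mul_lt_mul_of_pos_left hratio hlog
  field_simp at this
  linarith

variable {μ0 Γ : ℝ}

lemma tendsto_mul_pow_mul_one_sub_pow_atTop (hL : Admissible ρ L) (hμ0 : 0 < μ0) (hΓ : 0 < Γ)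
    (hΓ' : Γ ≤ 1) (hpos : 0 < 1 + ρ * log μ0) (hneg : 1 + ρ * log Γ < 0) :
    Tendsto (fun n : ℕ => n * μ0 ^ L n * (1 - Γ ^ L n) ^ (n - 1)) atTop atTop := by
  have hmain : Tendsto (fun n : ℕ => (n : ℝ) * μ0 ^ L n) atTop atTop :=
    tendsto_atTop_mono' _ (hL.eventually_rpow_le_mul_pow hμ0 (half_lt_self hpos))
      ((tendsto_rpow_atTop (half_pos hpos)).comp tendsto_natCast_atTop_atTop)
  have hsmall : Tendsto (fun n : ℕ => (n : ℝ) * Γ ^ L n) atTop (𝓝 0) := by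
    set β := -(1 + ρ * log Γ) / 2 with hβ_def
    have hβ : 0 < β := by linarith
    refine squeeze_zero' (.of_forall fun n => by positivity)
      (hL.eventually_mul_pow_le_rpow hΓ (by linarith : 1 + ρ * log Γ < -β))
      ((tendsto_rpow_neg_atTop hβ).comp tendsto_natCast_atTop_atTop)
  have hcorrection : Tendsto (fun n : ℕ => (1 - Γ ^ L n) ^ (n - 1)) atTop (𝓝 1) := by
    refine tendsto_one_sub_pow_nhds_one (fun n => by positivity) (fun n => pow_le_one₀ hΓ.le hΓ')
      (squeeze_zero (fun n => by positivity) (fun n => ?_) hsmall)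
    gcongr
    exact_mod_cast n.sub_le 1
  exact hmain.atTop_mul_pos one_pos hcorrection

lemma tendsto_mul_pow_mul_one_sub_pow_nhds_zero (hL : Admissible ρ L) (hμ0 : 0 ≤ μ0)
    (hμ0' : μ0 ≤ 1) (hΓ : 0 < Γ) (hΓ' : Γ ≤ 1) (h : 0 < 1 + ρ * log Γ) :
    Tendsto (fun n : ℕ => n * μ0 ^ L n * (1 - Γ ^ L n) ^ (n - 1)) atTop (𝓝 0) := by
  set α := (1 + ρ * log Γ) / 2
  have hα : 0 < α := half_pos h
  have hlim : Tendsto (fun n : ℕ => exp 1 * ((n : ℝ) * exp (-(n : ℝ) ^ α))) atTop (𝓝 0) := by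
    simpa using ((tendsto_mul_exp_neg_rpow hα).comp tendsto_natCast_atTop_atTop).const_mul (exp 1)
  have hΓL : ∀ n, 0 ≤ 1 - Γ ^ L n := fun n => sub_nonneg.2 (pow_le_one₀ hΓ.le hΓ')
  refine squeeze_zero' (.of_forall fun n => by have := hΓL n; positivity) ?_ hlim
  filter_upwards [hL.eventually_rpow_le_mul_pow hΓ (half_lt_self h), eventually_ge_atTop 1]
    with n hn hn1
  calc (n : ℝ) * μ0 ^ L n * (1 - Γ ^ L n) ^ (n - 1)
      ≤ n * exp (-((n - 1 : ℕ) * Γ ^ L n)) :=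
        mul_le_mul (mul_le_of_le_one_right n.cast_nonneg (pow_le_one₀ hμ0 hμ0'))
          (one_sub_pow_le_exp_neg_mul (pow_le_one₀ hΓ.le hΓ') _) (pow_nonneg (hΓL n) _)
          n.cast_nonneg
    _ ≤ n * exp (1 - n ^ α) := by
        gcongr
        rw [Nat.cast_sub hn1, Nat.cast_one, sub_mul, one_mul]
        linarith [pow_le_one₀ (n := L n) hΓ.le hΓ']
    _ = exp 1 * (n * exp (-(n : ℝ) ^ α)) := by rw [sub_eq_add_neg, exp_add]; ring

end Admissible

theorem mag_zero_infinity_law_first_moment_all_zero_attributes_general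
    (μ1 : ℝ) (hμ1 : 0 < μ1) (hμ1' : μ1 < 1)
    (q : Bool → Bool → ℝ) (hq : ∀ a b, 0 < q a b ∧ q a b < 1)
    (ρ : ℝ)
    (hμ0 : 1 + ρ * Real.log (1 - μ1) > 0)
    (L : ℕ → ℕ) (hL : Admissible ρ L) :
    (∀ n, ∫ ω, (numIsolatedWith q 0 ω : ℝ) ∂(magMeasure n (L n) μ1)
        = n * (1 - μ1) ^ L n * (1 - Gam μ1 q false ^ L n) ^ (n - 1)) ∧
    (1 + ρ * Real.log (Gam μ1 q false) < 0 →
      Tendsto (fun n => ∫ ω, (numIsolatedWith q 0 ω : ℝ) ∂(magMeasure n (L n) μ1))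
        atTop atTop) ∧
    (1 + ρ * Real.log (Gam μ1 q false) > 0 →
      Tendsto (fun n => ∫ ω, (numIsolatedWith q 0 ω : ℝ) ∂(magMeasure n (L n) μ1))
        atTop (nhds 0)) := by
  have hmean : ∀ n, ∫ ω, (numIsolatedWith q 0 ω : ℝ) ∂(magMeasure n (L n) μ1)
      = n * (1 - μ1) ^ L n * (1 - Gam μ1 q false ^ L n) ^ (n - 1) :=
    fun n => integral_numIsolatedWith_zero hμ1.le hμ1'.le hq
  have hΓ := gam_pos hμ1.le hμ1'.le (fun a b => (hq a b).1) false
  have hΓ' := (gam_lt_one hμ1.le hμ1'.le (fun a b => (hq a b).2) false).le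
  refine ⟨hmean, fun hneg => ?_, fun hpos => ?_⟩ <;> simp_rw [hmean]
  · exact hL.tendsto_mul_pow_mul_one_sub_pow_atTop (by linarith) hΓ hΓ' hμ0 hneg
  · exact hL.tendsto_mul_pow_mul_one_sub_pow_nhds_zero (by linarith) (by linarith) hΓ hΓ' hpos

theorem mag_zero_infinity_law_first_moment_all_zero_attributes
    (μ1 : ℝ) (hμ1 : 0 < μ1) (hμ1' : μ1 < 1)
    (q : Bool → Bool → ℝ) (hq : ∀ a b, 0 < q a b ∧ q a b < 1)
    (hqsym : q false true = q true false)
    (hΓ : Gam μ1 q false < Gam μ1 q true)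
    (ρ : ℝ) (hρ : 0 < ρ)
    (hμ0 : 1 + ρ * Real.log (1 - μ1) > 0)
    (L : ℕ → ℕ) (hL : Admissible ρ L) :
    (∀ n, ∫ ω, (numIsolatedWith q 0 ω : ℝ) ∂(magMeasure n (L n) μ1)
        = n * (1 - μ1) ^ L n * (1 - Gam μ1 q false ^ L n) ^ (n - 1)) ∧
    (1 + ρ * Real.log (Gam μ1 q false) < 0 →
      Tendsto (fun n => ∫ ω, (numIsolatedWith q 0 ω : ℝ) ∂(magMeasure n (L n) μ1))
        atTop atTop) ∧
    (1 + ρ * Real.log (Gam μ1 q false) > 0 →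
      Tendsto (fun n => ∫ ω, (numIsolatedWith q 0 ω : ℝ) ∂(magMeasure n (L n) μ1))
        atTop (nhds 0)) :=
  mag_zero_infinity_law_first_moment_all_zero_attributes_general μ1 hμ1 hμ1' q hq ρ hμ0 L hL
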